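/- arXiv:1911.00438 — 6 statements merged into one kernel-verified Lean document; each statement's English description precedes it below -/
import Mathlib

section
/- Let μ be a probability measure on a measurable space Ω and f a probability density with respect to μ. For any measurable set A ⊆ Ω with 0 < μ(A) < 1, the inequality ∫_A f dμ ≤ (H(f; μ) + log 2) / (−log μ(A)) holds, where H(f; μ) = ∫ f log f dμ is the relative entropy. -/
/-!
Young's inequality `x c ≤ x log x + e^c - x` integrated against `f` gives the Gibbs variational
inequality `∫ f g ≤ H(f; μ) + log ∫ e^g`. Testing it with `g = t · 1_A` gives
`t ∫_A f ≤ H(f; μ) + log (1 + (e^t - 1) μ(A))`, and the choice `e^t = 1 / μ(A)` turns the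
logarithm into `log (2 - μ(A)) ≤ log 2`.
-/
open MeasureTheory Real

lemma Real.mul_le_mul_log_add_exp_sub {x : ℝ} (hx : 0 ≤ x) (c : ℝ) :
    x * c ≤ x * log x + exp c - x := by
  rcases hx.eq_or_lt with rfl | hx
  · simpa using (exp_pos c).le
  · have h := mul_le_mul_of_nonneg_left (add_one_le_exp (c - log x)) hx.le
    rw [exp_sub, exp_log hx, mul_div_cancel₀ _ hx.ne'] at h
    linarith

section

variable {Ω : Type*} [MeasurableSpace Ω] {μ : Measure Ω} {f g : Ω → ℝ}

/-- The easy half of the Donsker–Varadhan variational formula for relative entropy. -/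
theorem integral_mul_le_integral_mul_log_add_log_integral_exp (hf : 0 ≤ f)
    (hf1 : ∫ ω, f ω ∂μ = 1) (hent : Integrable (fun ω => f ω * log (f ω)) μ)
    (hg : Integrable (fun ω => exp (g ω)) μ) (hfg : Integrable (fun ω => f ω * g ω) μ) :
    ∫ ω, f ω * g ω ∂μ ≤
      ∫ ω, f ω * log (f ω) ∂μ + log (∫ ω, exp (g ω) ∂μ) := by
  have hf_int : Integrable f μ := Integrable.of_integral_ne_zero (by simp [hf1])
  have : NeZero μ := ⟨by rintro rfl; simp at hf1⟩
  set Z := ∫ ω, exp (g ω) ∂μ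
  have hZ : 0 < Z := integral_exp_pos hg
  have hyoung : ∀ ω, f ω * g ω - log Z * f ω ≤
      f ω * log (f ω) + Z⁻¹ * exp (g ω) - f ω := fun ω => by
    have := Real.mul_le_mul_log_add_exp_sub (hf ω) (g ω - log Z)
    rw [exp_sub, exp_log hZ] at this
    linarith [div_eq_inv_mul (exp (g ω)) Z]
  have hrhs : Integrable (fun ω => f ω * log (f ω) + Z⁻¹ * exp (g ω)) μ :=
    hent.add (hg.const_mul _)
  have hint : ∫ ω, (f ω * g ω - log Z * f ω) ∂μ ≤
      ∫ ω, (f ω * log (f ω) + Z⁻¹ * exp (g ω) - f ω) ∂μ :=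
    integral_mono (hfg.sub (hf_int.const_mul _)) (hrhs.sub hf_int) hyoung
  rw [integral_sub hfg (hf_int.const_mul _), integral_sub hrhs hf_int,
    integral_add hent (hg.const_mul _), integral_const_mul, integral_const_mul, hf1,
    inv_mul_cancel₀ hZ.ne'] at hint
  linarith

end

lemma exp_indicator_const_eq {Ω : Type*} (A : Set Ω) (t : ℝ) :
    (fun ω => exp (A.indicator (fun _ => t) ω)) =
      fun ω => 1 + A.indicator (fun _ => exp t - 1) ω := by
  ext ω
  by_cases hω : ω ∈ A <;> simp [hω]

section

variable {Ω : Type*} [MeasurableSpace Ω] {μ : Measure Ω} [IsProbabilityMeasure μ] {A : Set Ω}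

lemma integrable_exp_indicator_const (hA : MeasurableSet A) (t : ℝ) :
    Integrable (fun ω => exp (A.indicator (fun _ => t) ω)) μ := by
  rw [exp_indicator_const_eq]
  exact (integrable_const _).add ((integrable_const _).indicator hA)

lemma integral_exp_indicator_const (hA : MeasurableSet A) (t : ℝ) :
    ∫ ω, exp (A.indicator (fun _ => t) ω) ∂μ = 1 + (exp t - 1) * μ.real A := by
  rw [exp_indicator_const_eq, integral_add (integrable_const _) ((integrable_const _).indicator hA),
    integral_const, integral_indicator_const _ hA]
  simp [mul_comm]

theorem mul_setIntegral_le_integral_mul_log_add_log {f : Ω → ℝ} (hf : 0 ≤ f)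
    (hf1 : ∫ ω, f ω ∂μ = 1) (hent : Integrable (fun ω => f ω * log (f ω)) μ)
    (hA : MeasurableSet A) (t : ℝ) :
    t * ∫ ω in A, f ω ∂μ ≤
      ∫ ω, f ω * log (f ω) ∂μ + log (1 + (exp t - 1) * μ.real A) := by
  have hf_int : Integrable f μ := Integrable.of_integral_ne_zero (by simp [hf1])
  have hfg : (fun ω => f ω * A.indicator (fun _ => t) ω) = fun ω => t * A.indicator f ω := by
    ext ω
    by_cases hω : ω ∈ A <;> simp [hω, mul_comm]
  have hgibbs := integral_mul_le_integral_mul_log_add_log_integral_exp hf hf1 hent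
    (integrable_exp_indicator_const hA t) (by rw [hfg]; exact (hf_int.indicator hA).const_mul t)
  rwa [hfg, integral_const_mul, integral_indicator hA, integral_exp_indicator_const hA] at hgibbs

end

theorem entropy_set_bound_general {Ω : Type*} [MeasurableSpace Ω] (μ : Measure Ω)
    [IsProbabilityMeasure μ] (f : Ω → ℝ) (hf : 0 ≤ f)
    (hf1 : ∫ ω, f ω ∂μ = 1)
    (hent : Integrable (fun ω => f ω * Real.log (f ω)) μ)
    (A : Set Ω) (hA : MeasurableSet A) (h0 : 0 < μ A) (h1 : μ A < 1) :
    ∫ ω in A, f ω ∂μ ≤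
      ((∫ ω, f ω * Real.log (f ω) ∂μ) + Real.log 2) / (-Real.log (μ A).toReal) := by
  set a := μ.real A with ha
  have ha0 : 0 < a := ENNReal.toReal_pos h0.ne' (measure_ne_top μ A)
  have ha1 : a < 1 := by simpa [ha, measureReal_def] using ENNReal.toReal_strict_mono (by simp) h1
  have ht : 0 < -log a := neg_pos.mpr (log_neg ha0 ha1)
  have hbound := mul_setIntegral_le_integral_mul_log_add_log hf hf1 hent hA (-log a)
  have hZ : 1 + (exp (-log a) - 1) * a = 2 - a := by
    rw [exp_neg, exp_log ha0]; field_simp; ring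
  have hlog : log (2 - a) ≤ log 2 := log_le_log (by linarith) (by linarith)
  rw [hZ] at hbound
  rw [← measureReal_def, le_div_iff₀ ht]
  linarith

theorem entropy_set_bound {Ω : Type*} [MeasurableSpace Ω] (μ : Measure Ω)
    [IsProbabilityMeasure μ] (f : Ω → ℝ) (hmf : Measurable f) (hf : 0 ≤ f)
    (hf1 : ∫ ω, f ω ∂μ = 1)
    (hent : Integrable (fun ω => f ω * Real.log (f ω)) μ)
    (A : Set Ω) (hA : MeasurableSet A) (h0 : 0 < μ A) (h1 : μ A < 1) :
    ∫ ω in A, f ω ∂μ ≤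
      ((∫ ω, f ω * Real.log (f ω) ∂μ) + Real.log 2) / (-Real.log (μ A).toReal) :=
  entropy_set_bound_general μ f hf hf1 hent A hA h0 h1
end

section
/- Let (Ω₁, μ₁) and (Ω₂, μ₂) be probability spaces and let f be a probability density on Ω₁ × Ω₂ with respect to μ = μ₁ ⊗ μ₂. Let f₁ be the density of the first marginal of f dμ with respect to μ₁. Then H(f₁; μ₁) ≤ H(f; μ), where H denotes relative entropy. -/
open MeasureTheory Real

/-!
Write `F x = ∫ f (x, y) dμ₂(y)`. Jensen's inequality for the convex function `t ↦ t log t` on each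
fibre gives `F x log F x ≤ ∫ f (x, y) log f (x, y) dμ₂(y)`; integrating in `x` and using Fubini
on the right-hand side gives the claim.
-/

section MulLog

variable {α : Type*} [MeasurableSpace α] {μ : Measure α} {f : α → ℝ}

lemma integrable_of_integrable_mul_log [IsFiniteMeasure μ] (hf : AEStronglyMeasurable f μ)
    (h0 : 0 ≤ᵐ[μ] f) (h : Integrable (fun x => f x * log (f x)) μ) : Integrable f μ :=
  integrable_of_le_of_le hf h0
    (by filter_upwards [h0] with x hx using
      show f x ≤ f x * log (f x) + 1 by linarith [self_sub_one_le_mul_log hx])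
    (integrable_zero _ _ _) (h.add (integrable_const 1))

lemma mul_log_integral_le_integral_mul_log [IsProbabilityMeasure μ] (h0 : 0 ≤ᵐ[μ] f)
    (hf : Integrable f μ) (h : Integrable (fun x => f x * log (f x)) μ) :
    (∫ x, f x ∂μ) * log (∫ x, f x ∂μ) ≤ ∫ x, f x * log (f x) ∂μ :=
  convexOn_mul_log.map_integral_le continuous_mul_log.continuousOn isClosed_Ici h0 hf h

end MulLog

theorem marginal_entropy_le_general {Ω₁ Ω₂ : Type*} [MeasurableSpace Ω₁] [MeasurableSpace Ω₂]
    (μ₁ : Measure Ω₁) (μ₂ : Measure Ω₂)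
    [IsProbabilityMeasure μ₁] [IsProbabilityMeasure μ₂]
    (f : Ω₁ × Ω₂ → ℝ) (hmf : Measurable f) (hf : 0 ≤ f)
    (hent : Integrable (fun z => f z * Real.log (f z)) (μ₁.prod μ₂)) :
    ∫ x, (∫ y, f (x, y) ∂μ₂) * Real.log (∫ y, f (x, y) ∂μ₂) ∂μ₁ ≤
      ∫ z, f z * Real.log (f z) ∂(μ₁.prod μ₂) := by
  set F : Ω₁ → ℝ := fun x => ∫ y, f (x, y) ∂μ₂
  have hF_meas : Measurable F := hmf.stronglyMeasurable.integral_prod_right'.measurable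
  have hF_nonneg : ∀ x, 0 ≤ F x := fun x => integral_nonneg fun y => hf (x, y)
  have hfi : Integrable f (μ₁.prod μ₂) :=
    integrable_of_integrable_mul_log hmf.aestronglyMeasurable (ae_of_all _ hf) hent
  have hjensen : ∀ᵐ x ∂μ₁, F x * log (F x) ≤ ∫ y, f (x, y) * log (f (x, y)) ∂μ₂ := by
    filter_upwards [hfi.prod_right_ae, hent.prod_right_ae] with x hfx hentx
    exact mul_log_integral_le_integral_mul_log (ae_of_all _ fun y => hf (x, y)) hfx hentx
  -- `-1 ≤ t log t` and Jensen sandwich the integrand, so the left integral is not a junk `0`.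
  have hF_ent : Integrable (fun x => F x * log (F x)) μ₁ :=
    integrable_of_le_of_le (hF_meas.mul (measurable_log.comp hF_meas)).aestronglyMeasurable
      (ae_of_all _ fun x => show -1 ≤ F x * log (F x) by
        linarith [self_sub_one_le_mul_log (hF_nonneg x), hF_nonneg x])
      hjensen (integrable_const (-1)) hent.integral_prod_left
  calc ∫ x, F x * log (F x) ∂μ₁
      ≤ ∫ x, ∫ y, f (x, y) * log (f (x, y)) ∂μ₂ ∂μ₁ :=
        integral_mono_ae hF_ent hent.integral_prod_left hjensen
    _ = ∫ z, f z * log (f z) ∂(μ₁.prod μ₂) := (integral_prod _ hent).symm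

theorem marginal_entropy_le {Ω₁ Ω₂ : Type*} [MeasurableSpace Ω₁] [MeasurableSpace Ω₂]
    (μ₁ : Measure Ω₁) (μ₂ : Measure Ω₂)
    [IsProbabilityMeasure μ₁] [IsProbabilityMeasure μ₂]
    (f : Ω₁ × Ω₂ → ℝ) (hmf : Measurable f) (hf : 0 ≤ f)
    (hf1 : ∫ z, f z ∂(μ₁.prod μ₂) = 1)
    (hent : Integrable (fun z => f z * Real.log (f z)) (μ₁.prod μ₂)) :
    ∫ x, (∫ y, f (x, y) ∂μ₂) * Real.log (∫ y, f (x, y) ∂μ₂) ∂μ₁ ≤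
      ∫ z, f z * Real.log (f z) ∂(μ₁.prod μ₂) :=
  marginal_entropy_le_general μ₁ μ₂ f hmf hf hent
end

section
/- Let H_n be the (n−1)×(n−1) symmetric tridiagonal matrix with diagonal entries (H_n)_{jj} = b_j + b_{j+1} and off-diagonal entries (H_n)_{j,j+1} = (H_n)_{j+1,j} = −b_{j+1}, where b₁, …, b_n are real numbers with b_j ≥ c > 0 for all j. Then the smallest eigenvalue of H_n satisfies λ_min(H_n) ≥ 6c / ((n−1)(n+1)) for all n ≥ 2. -/
open Matrix Finset

/-!
Write `D` for the `(m + 1) × m` difference matrix, `(D y)_k = y_{k+1} - y_k` for `k = 0, …, m`,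
with `y_0 = y_{m+1} = 0`.
With `y` as in the context, `x = -D y`, so the Hessian is `H = Dᵀ diag(b) D` and an
eigenvector `v` satisfies `λ |v|² = ∑ b_k (D v)_k² ≥ c |D v|²`. The discrete Poincaré inequality
`6 ∑ w_k² ≤ (N² - 1) ∑ (w_{k+1} - w_k)²` for `w` vanishing at `0` and `N` closes the argument: by
Cauchy–Schwarz on `[0, k]` and on `[k, N]`, `N w_k² ≤ k (N - k) ∑ (w_{j+1} - w_j)²`, and
`∑_k k (N - k) = N (N² - 1) / 6`.
-/

theorem Fin.sum_ite_val_eq {M : Type*} [AddCommMonoid M] {m : ℕ} (a : ℕ) (f : Fin m → M) :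
    ∑ i : Fin m, (if (i : ℕ) = a then f i else 0) = if h : a < m then f ⟨a, h⟩ else 0 := by
  split_ifs with h
  · rw [Fintype.sum_eq_single ⟨a, h⟩ fun i hi => if_neg fun h' => hi (Fin.ext h')]
    simp
  · exact Finset.sum_eq_zero fun i _ => if_neg fun h' : (i : ℕ) = a => h (h' ▸ i.isLt)

theorem Fin.sum_ite_eq_val {M : Type*} [AddCommMonoid M] {m : ℕ} (a : ℕ) (f : Fin m → M) :
    ∑ i : Fin m, (if a = (i : ℕ) then f i else 0) = if h : a < m then f ⟨a, h⟩ else 0 := by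
  simp_rw [eq_comm (a := a), Fin.sum_ite_val_eq]

theorem dotProduct_transpose_mul_diagonal_mul_mulVec {R m n : Type*} [CommRing R] [Fintype m]
    [Fintype n] [DecidableEq m] (A : Matrix m n R) (d : m → R) (v : n → R) :
    v ⬝ᵥ ((Aᵀ * diagonal d * A) *ᵥ v) = ∑ k, d k * (A *ᵥ v) k ^ 2 := by
  rw [← mulVec_mulVec, ← mulVec_mulVec, dotProduct_mulVec, vecMul_transpose, dotProduct]
  simp only [mulVec_diagonal]
  exact sum_congr rfl fun k _ => by ring

section Poincare

theorem sq_sub_le_mul_sum_sq_sub (w : ℕ → ℝ) {a b : ℕ} (hab : a ≤ b) :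
    (w b - w a) ^ 2 ≤ ((b : ℝ) - a) * ∑ j ∈ Ico a b, (w (j + 1) - w j) ^ 2 := by
  rw [← sum_Ico_sub w hab, ← Nat.cast_sub hab, ← Nat.card_Ico]
  exact sq_sum_le_card_mul_sum_sq

theorem six_mul_sum_range_mul_sub (N : ℕ) :
    6 * ∑ k ∈ range N, (k : ℝ) * (N - k) = N * (N ^ 2 - 1) := by
  have hlin : ∀ N : ℕ, 2 * ∑ k ∈ range N, (k : ℝ) = N * (N - 1) := by
    intro N
    induction N with
    | zero => simp
    | succ N ih => rw [sum_range_succ, mul_add, ih]; push_cast; ring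
  have hsq : ∀ N : ℕ, 6 * ∑ k ∈ range N, (k : ℝ) * k = N * (N - 1) * (2 * N - 1) := by
    intro N
    induction N with
    | zero => simp
    | succ N ih => rw [sum_range_succ, mul_add, ih]; push_cast; ring
  simp only [mul_sub, sum_sub_distrib, ← sum_mul]
  linear_combination (3 * (N : ℝ)) * hlin N - hsq N

variable {w : ℕ → ℝ} {N : ℕ}

theorem mul_sq_le_of_eq_zero_of_eq_zero (h0 : w 0 = 0) (hN : w N = 0) {k : ℕ} (hk : k ≤ N) :
    N * w k ^ 2 ≤ k * (N - k) * ∑ j ∈ range N, (w (j + 1) - w j) ^ 2 := by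
  have hleft := sq_sub_le_mul_sum_sq_sub w (Nat.zero_le k)
  have hright := sq_sub_le_mul_sum_sq_sub w hk
  rw [h0, sub_zero, Nat.cast_zero, sub_zero] at hleft
  rw [hN, zero_sub, neg_sq] at hright
  rw [range_eq_Ico, ← sum_Ico_consecutive _ (Nat.zero_le k) hk]
  have hkN : (k : ℝ) ≤ N := by exact_mod_cast hk
  nlinarith [mul_le_mul_of_nonneg_left hleft (sub_nonneg.2 hkN),
    mul_le_mul_of_nonneg_left hright (Nat.cast_nonneg k)]

theorem six_mul_sum_sq_le_of_eq_zero_of_eq_zero (h0 : w 0 = 0) (hN : w N = 0) :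
    6 * ∑ k ∈ range N, w k ^ 2 ≤ ((N : ℝ) ^ 2 - 1) * ∑ k ∈ range N, (w (k + 1) - w k) ^ 2 := by
  rcases N.eq_zero_or_pos with rfl | hpos
  · simp
  have hpoint : N * ∑ k ∈ range N, w k ^ 2
      ≤ (∑ k ∈ range N, (k : ℝ) * (N - k)) * ∑ k ∈ range N, (w (k + 1) - w k) ^ 2 := by
    rw [mul_sum, sum_mul]
    exact sum_le_sum fun k hk => mul_sq_le_of_eq_zero_of_eq_zero h0 hN (mem_range.1 hk).le
  have hNpos : (0 : ℝ) < N := by exact_mod_cast hpos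
  refine le_of_mul_le_mul_left ?_ hNpos
  calc (N : ℝ) * (6 * ∑ k ∈ range N, w k ^ 2)
      ≤ 6 * (∑ k ∈ range N, (k : ℝ) * (N - k)) * ∑ k ∈ range N, (w (k + 1) - w k) ^ 2 := by
        linarith
    _ = _ := by rw [six_mul_sum_range_mul_sub]; ring

end Poincare

def zeroPad {m : ℕ} (v : Fin m → ℝ) : ℕ → ℝ
  | 0 => 0
  | k + 1 => if h : k < m then v ⟨k, h⟩ else 0

def diffMatrix (m : ℕ) : Matrix (Fin (m + 1)) (Fin m) ℝ :=
  fun k i => (if (k : ℕ) = i then 1 else 0) - (if (k : ℕ) = i + 1 then 1 else 0)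

theorem diffMatrix_mulVec {m : ℕ} (v : Fin m → ℝ) (k : Fin (m + 1)) :
    (diffMatrix m *ᵥ v) k = zeroPad v (k + 1) - zeroPad v k := by
  rcases k with ⟨_ | k, hk⟩
  · simp [diffMatrix, mulVec, dotProduct, Fin.sum_ite_eq_val, zeroPad]
  · simp [diffMatrix, mulVec, dotProduct, sub_mul, Fin.sum_ite_eq_val, zeroPad]

theorem transpose_diffMatrix_mul_diagonal_mul_apply {m : ℕ} (b : Fin (m + 1) → ℝ) (i j : Fin m) :
    ((diffMatrix m)ᵀ * diagonal b * diffMatrix m) i j =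
      if (i : ℕ) = (j : ℕ) then
        b ⟨i, by omega⟩ + b ⟨(i : ℕ) + 1, by omega⟩
      else if (i : ℕ) + 1 = (j : ℕ) ∨ (j : ℕ) + 1 = (i : ℕ) then
        -b ⟨max (i : ℕ) (j : ℕ), by omega⟩
      else 0 := by
  rw [mul_apply]
  simp only [mul_diagonal, transpose_apply]
  simp only [diffMatrix, sub_mul, ite_mul, one_mul, zero_mul, sum_sub_distrib, Fin.sum_ite_val_eq]
  rw [dif_pos (by omega), dif_pos (by omega)]
  split_ifs <;> first
    | omega
    | (simp only [show max (i : ℕ) j = i by omega]; ring)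
    | (simp only [show max (i : ℕ) j = i + 1 by omega]; ring)
    | ring

theorem sum_range_sq_zeroPad {m : ℕ} (v : Fin m → ℝ) :
    ∑ k ∈ range (m + 1), zeroPad v k ^ 2 = v ⬝ᵥ v := by
  rw [sum_range_succ', dotProduct, ← Fin.sum_univ_eq_sum_range]
  simp [zeroPad, sq]

theorem six_mul_dotProduct_self_le {m : ℕ} (v : Fin m → ℝ) :
    6 * (v ⬝ᵥ v) ≤ (((m : ℝ) + 1) ^ 2 - 1) * (diffMatrix m *ᵥ v ⬝ᵥ diffMatrix m *ᵥ v) := by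
  have h := six_mul_sum_sq_le_of_eq_zero_of_eq_zero (w := zeroPad v) (N := m + 1) rfl
    (by simp [zeroPad])
  rw [sum_range_sq_zeroPad,
    ← Fin.sum_univ_eq_sum_range (fun k => (zeroPad v (k + 1) - zeroPad v k) ^ 2)] at h
  push_cast at h
  simpa [dotProduct, diffMatrix_mulVec, sq] using h

theorem six_mul_le_mul_of_hasEigenvalue {m : ℕ} {c : ℝ} (hc : 0 ≤ c) {b : Fin (m + 1) → ℝ}
    (hb : ∀ k, c ≤ b k) {lam : ℝ}
    (hlam : Module.End.HasEigenvalue (toLin' ((diffMatrix m)ᵀ * diagonal b * diffMatrix m)) lam) :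
    6 * c ≤ lam * (((m : ℝ) + 1) ^ 2 - 1) := by
  obtain ⟨v, hv⟩ := hlam.exists_hasEigenvector
  have hAv : ((diffMatrix m)ᵀ * diagonal b * diffMatrix m) *ᵥ v = lam • v := by
    rw [← toLin'_apply, hv.apply_eq_smul]
  set d := diffMatrix m *ᵥ v
  have hRayleigh : c * (d ⬝ᵥ d) ≤ lam * (v ⬝ᵥ v) := by
    rw [← smul_eq_mul (a := lam), ← dotProduct_smul, ← hAv,
      dotProduct_transpose_mul_diagonal_mul_mulVec, dotProduct, mul_sum]
    exact sum_le_sum fun k _ => by rw [← sq]; exact mul_le_mul_of_nonneg_right (hb k) (sq_nonneg _)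
  have hv0 : 0 < v ⬝ᵥ v := by simpa using dotProduct_star_self_pos_iff.2 hv.2
  have hN : (0 : ℝ) ≤ ((m : ℝ) + 1) ^ 2 - 1 := by nlinarith [(m.cast_nonneg : (0 : ℝ) ≤ m)]
  refine le_of_mul_le_mul_right ?_ hv0
  calc 6 * c * (v ⬝ᵥ v) = c * (6 * (v ⬝ᵥ v)) := by ring
    _ ≤ c * ((((m : ℝ) + 1) ^ 2 - 1) * (d ⬝ᵥ d)) :=
      mul_le_mul_of_nonneg_left (six_mul_dotProduct_self_le v) hc
    _ = (((m : ℝ) + 1) ^ 2 - 1) * (c * (d ⬝ᵥ d)) := by ring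
    _ ≤ (((m : ℝ) + 1) ^ 2 - 1) * (lam * (v ⬝ᵥ v)) := mul_le_mul_of_nonneg_left hRayleigh hN
    _ = lam * (((m : ℝ) + 1) ^ 2 - 1) * (v ⬝ᵥ v) := by ring

theorem tridiagonal_min_eigenvalue (n : ℕ) (hn : 2 ≤ n) (c : ℝ) (hc : 0 < c)
    (b : Fin n → ℝ) (hb : ∀ j, c ≤ b j)
    (H : Matrix (Fin (n - 1)) (Fin (n - 1)) ℝ)
    (hH : ∀ i j : Fin (n - 1),
      H i j =
        if (i : ℕ) = (j : ℕ) then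
          b ⟨i, by have := i.isLt; omega⟩ + b ⟨(i : ℕ) + 1, by have := i.isLt; omega⟩
        else if (i : ℕ) + 1 = (j : ℕ) ∨ (j : ℕ) + 1 = (i : ℕ) then
          -b ⟨max (i : ℕ) (j : ℕ), by have := i.isLt; have := j.isLt; omega⟩
        else 0)
    (lam : ℝ) (hlam : Module.End.HasEigenvalue (Matrix.toLin' H) lam) :
    6 * c / (((n : ℝ) - 1) * ((n : ℝ) + 1)) ≤ lam := by
  obtain ⟨m, rfl⟩ : ∃ m, n = m + 1 := ⟨n - 1, by omega⟩
  have hHD : H = (diffMatrix m)ᵀ * diagonal b * diffMatrix m :=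
    Matrix.ext fun i j => (hH i j).trans (transpose_diffMatrix_mul_diagonal_mul_apply b i j).symm
  rw [hHD] at hlam
  have key := six_mul_le_mul_of_hasEigenvalue hc.le hb hlam
  have hm : (1 : ℝ) ≤ m := by exact_mod_cast (by omega : 1 ≤ m)
  push_cast
  rw [div_le_iff₀ (by nlinarith)]
  linarith
end

section
/- Let b₁, …, b_n be positive reals and define Q_n(λ) = (−1)ⁿ det(λ I_{n−1} − H_n) · ∏_{j=1}^n b_j^{−1}, where H_n is the tridiagonal matrix with diagonal b_j + b_{j+1} and off-diagonal −b_{j+1}. Then Q_n(0) = −∑_{j=1}^n 1/b_j. -/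
/-!
Write `D_k` for the determinant of the `k × k` matrix built from weights `b_0, …, b_k`.
Expanding along the last row gives the three-term recurrence
`D_{k+2} = (b_{k+1} + b_{k+2}) D_{k+1} - b_{k+1}² D_k`, which collapses to the first-order
recurrence `D_{k+1} = b_{k+1} D_k + b_0 ⋯ b_k`. Hence `D_k = (b_0 ⋯ b_k) ∑ 1 / b_i`, and the
sign `(-1)^n` cancels against `det (-H) = (-1)^(n-1) det H` up to one factor `-1`.
-/

open Matrix Finset

section Tridiagonal

variable {R : Type*} [CommRing R]

/-- The paper's `H_{k+1}`, with the weights `b_1, …, b_{k+1}` stored as `b 0, …, b k`. -/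
def tridiag (b : ℕ → R) (k : ℕ) : Matrix (Fin k) (Fin k) R :=
  Matrix.of fun i j =>
    if (i : ℕ) = j then b i + b (i + 1)
    else if (i : ℕ) + 1 = j ∨ (j : ℕ) + 1 = i then -b (max i j)
    else 0

lemma tridiag_submatrix_castSucc (b : ℕ → R) (k : ℕ) :
    (tridiag b (k + 1)).submatrix Fin.castSucc Fin.castSucc = tridiag b k :=
  rfl

lemma tridiag_apply_of_add_one_lt {b : ℕ → R} {k : ℕ} {i j : Fin k}
    (h : (i : ℕ) + 1 < j ∨ (j : ℕ) + 1 < i) : tridiag b k i j = 0 := by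
  simp only [tridiag, of_apply]
  rw [if_neg (by omega), if_neg (by omega)]

lemma det_tridiag_add_two (b : ℕ → R) (k : ℕ) :
    (tridiag b (k + 2)).det =
      (b (k + 1) + b (k + 2)) * (tridiag b (k + 1)).det - b (k + 1) ^ 2 * (tridiag b k).det := by
  set M := (tridiag b (k + 2)).submatrix Fin.castSucc (Fin.castSucc (Fin.last k)).succAbove
  have hM : M.det = -b (k + 1) * (tridiag b k).det := by
    rw [det_succ_column M (Fin.last k), Fintype.sum_eq_single (Fin.last k)]
    · have h_minor : M.submatrix (Fin.last k).succAbove (Fin.last k).succAbove = tridiag b k := by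
        ext i j
        simp [M, tridiag]
      have h_entry : M (Fin.last k) (Fin.last k) = -b (k + 1) := by simp [M, tridiag]
      rw [h_minor, h_entry, Fin.val_last, Even.neg_one_pow ⟨k, rfl⟩, one_mul]
    · intro i hi
      have : (i : ℕ) < k := Fin.val_lt_last hi
      simp only [M, submatrix_apply, Fin.succAbove_castSucc_self, Fin.succ_last]
      rw [tridiag_apply_of_add_one_lt (by simp; omega)]
      ring
  rw [det_succ_row _ (Fin.last (k + 1)),
    Fintype.sum_eq_add (Fin.last (k + 1)) (Fin.castSucc (Fin.last k))]
  · have h_diag :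
        tridiag b (k + 2) (Fin.last (k + 1)) (Fin.last (k + 1)) = b (k + 1) + b (k + 2) := by
      simp [tridiag]
    have h_sub : tridiag b (k + 2) (Fin.last (k + 1)) (Fin.last k).castSucc = -b (k + 1) := by
      simp [tridiag]
    rw [Fin.succAbove_last, tridiag_submatrix_castSucc, hM, h_diag, h_sub, Fin.val_castSucc,
      Fin.val_last, Fin.val_last, Even.neg_one_pow ⟨k + 1, rfl⟩,
      Odd.neg_one_pow ⟨k, by ring⟩]
    ring
  · exact (Fin.castSucc_lt_last _).ne'
  · rintro j ⟨hj, hj'⟩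
    simp only [ne_eq, Fin.ext_iff, Fin.val_last, Fin.val_castSucc] at hj hj'
    rw [tridiag_apply_of_add_one_lt (by simp; omega)]
    ring

lemma det_tridiag_succ (b : ℕ → R) (k : ℕ) :
    (tridiag b (k + 1)).det = b (k + 1) * (tridiag b k).det + ∏ i ∈ range (k + 1), b i := by
  induction k with
  | zero => simp [tridiag, add_comm]
  | succ k ih =>
    rw [det_tridiag_add_two, ih, prod_range_succ _ (k + 1)]
    ring

end Tridiagonal

lemma det_tridiag_eq_prod_mul_sum_inv {K : Type*} [Field K] (b : ℕ → K) (k : ℕ)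
    (hb : ∀ i ≤ k, b i ≠ 0) :
    (tridiag b k).det = (∏ i ∈ range (k + 1), b i) * ∑ i ∈ range (k + 1), (b i)⁻¹ := by
  induction k with
  | zero => simp [hb 0 le_rfl]
  | succ k ih =>
    rw [det_tridiag_succ, ih fun i hi => hb i (by omega), prod_range_succ _ (k + 1),
      sum_range_succ _ (k + 1), mul_add, mul_inv_cancel_right₀ (hb (k + 1) le_rfl)]
    ring

theorem tridiagonal_char_poly_at_zero (n : ℕ) (hn : 1 ≤ n)
    (b : Fin n → ℝ) (hb : ∀ j, 0 < b j)
    (H : Matrix (Fin (n - 1)) (Fin (n - 1)) ℝ)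
    (hH : ∀ i j : Fin (n - 1),
      H i j =
        if (i : ℕ) = (j : ℕ) then
          b ⟨i, by have := i.isLt; omega⟩ + b ⟨(i : ℕ) + 1, by have := i.isLt; omega⟩
        else if (i : ℕ) + 1 = (j : ℕ) ∨ (j : ℕ) + 1 = (i : ℕ) then
          -b ⟨max (i : ℕ) (j : ℕ), by have := i.isLt; have := j.isLt; omega⟩
        else 0) :
    (-1 : ℝ) ^ n * ((0 : ℝ) • (1 : Matrix (Fin (n - 1)) (Fin (n - 1)) ℝ) - H).det *
        ∏ j, (b j)⁻¹ = -∑ j, (b j)⁻¹ := by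
  obtain ⟨m, rfl⟩ : ∃ m, n = m + 1 := ⟨n - 1, by omega⟩
  let b' : ℕ → ℝ := fun i => if h : i < m + 1 then b ⟨i, h⟩ else 0
  have hb' (i : Fin (m + 1)) : b' i = b i := dif_pos i.isLt
  have hH' : H = tridiag b' m := by
    ext i j
    rw [hH]
    simp only [tridiag, of_apply]
    split_ifs <;> simp [b']
  have hb'_ne (i : ℕ) (hi : i ≤ m) : b' i ≠ 0 := by
    simpa only [b', dif_pos (show i < m + 1 by omega)] using (hb _).ne'
  have hP : ∏ i ∈ range (m + 1), b' i ≠ 0 :=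
    prod_ne_zero_iff.mpr fun i hi => hb'_ne i (Nat.lt_succ_iff.mp (mem_range.mp hi))
  simp only [← hb']
  rw [Fin.prod_univ_eq_prod_range (fun i => (b' i)⁻¹),
    Fin.sum_univ_eq_sum_range (fun i => (b' i)⁻¹), zero_smul, zero_sub, det_neg,
    Fintype.card_fin, hH', det_tridiag_eq_prod_mul_sum_inv b' m hb'_ne, prod_inv_distrib,
    Nat.add_sub_cancel, pow_succ]
  field_simp
  rw [← pow_mul, pow_mul', neg_one_sq, one_pow, one_mul]
end

section
/- Let b₁, …, b_n be reals with b_j ≥ c > 0. For each 1 ≤ j' ≤ n−1, the product (∑_{j=1}^{j'} 1/b_j)(∑_{j=j'+1}^n 1/b_j) ≤ (j'(n−j')/(cn)) ∑_{j=1}^n 1/b_j. Consequently, ∑_{j'=1}^{n−1} (∑_{j=1}^{j'} 1/b_j)(∑_{j=j'+1}^n 1/b_j) ≤ ((n−1)(n+1)/(6c)) ∑_{j=1}^n 1/b_j. -/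
/-!
Write `A`, `B` for the two partial sums of `1 / b_j` and `p = j'`, `q = n - j'` for their numbers of
terms, so `c A ≤ p` and `c B ≤ q`. Adding `q B (c A) ≤ p q B` and `p A (c B) ≤ p q A` gives
`c (p + q) A B ≤ p q (A + B)`, the first claim. The second follows by summing over `j'`, using
`∑_{j=1}^{n-1} j (n - j) = n (n - 1) (n + 1) / 6`.
-/

open Finset

theorem mul_mul_add_le_of_le_mul {A B p q M : ℝ} (hA : 0 ≤ A) (hB : 0 ≤ B) (hp : 0 ≤ p)
    (hq : 0 ≤ q) (hAp : A ≤ p * M) (hBq : B ≤ q * M) :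
    A * B * (p + q) ≤ p * q * M * (A + B) := by
  have hqBA : q * B * A ≤ q * B * (p * M) := mul_le_mul_of_nonneg_left hAp (by positivity)
  have hpAB : p * A * B ≤ p * A * (q * M) := mul_le_mul_of_nonneg_left hBq (by positivity)
  linarith

theorem sum_mul_sum_mul_card_add_card_le {ι : Type*} [DecidableEq ι] {s t : Finset ι}
    {f : ι → ℝ} {M : ℝ} (hf0 : ∀ i ∈ s ∪ t, 0 ≤ f i) (hfM : ∀ i ∈ s ∪ t, f i ≤ M) :
    (∑ i ∈ s, f i) * (∑ i ∈ t, f i) * (#s + #t) ≤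
      #s * #t * M * (∑ i ∈ s, f i + ∑ i ∈ t, f i) := by
  have hs : ∀ i ∈ s, i ∈ s ∪ t := fun i hi => mem_union_left t hi
  have ht : ∀ i ∈ t, i ∈ s ∪ t := fun i hi => mem_union_right s hi
  refine mul_mul_add_le_of_le_mul (sum_nonneg fun i hi => hf0 i (hs i hi))
    (sum_nonneg fun i hi => hf0 i (ht i hi)) (Nat.cast_nonneg _) (Nat.cast_nonneg _) ?_ ?_
  · simpa using sum_le_card_nsmul s f M fun i hi => hfM i (hs i hi)
  · simpa using sum_le_card_nsmul t f M fun i hi => hfM i (ht i hi)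

theorem sum_Icc_eq_add_sum_Icc {M : Type*} [AddCommMonoid M] (f : ℕ → M) {m n : ℕ} (hmn : m ≤ n) :
    ∑ j ∈ Icc 1 n, f j = ∑ j ∈ Icc 1 m, f j + ∑ j ∈ Icc (m + 1) n, f j := by
  have hIoc : ∀ k l : ℕ, Icc (k + 1) l = Ioc k l := Icc_add_one_left_eq_Ioc
  rw [(hIoc 0 n : Icc 1 n = Ioc 0 n), (hIoc 0 m : Icc 1 m = Ioc 0 m), hIoc m n,
    sum_Ioc_consecutive f m.zero_le hmn]

theorem sum_Icc_mul_sum_Icc_le {m n : ℕ} (hmn : m < n) {c : ℝ} (hc : 0 < c) {f : ℕ → ℝ}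
    (hf0 : ∀ j ∈ Icc 1 n, 0 ≤ f j) (hfc : ∀ j ∈ Icc 1 n, f j ≤ c⁻¹) :
    (∑ j ∈ Icc 1 m, f j) * (∑ j ∈ Icc (m + 1) n, f j) ≤
      m * (n - m) / (c * n) * ∑ j ∈ Icc 1 n, f j := by
  have hunion : Icc 1 m ∪ Icc (m + 1) n = Icc 1 n := by
    ext j; simp only [mem_union, mem_Icc]; omega
  have key := sum_mul_sum_mul_card_add_card_le (hunion ▸ hf0) (hunion ▸ hfc)
  rw [Nat.card_Icc, Nat.card_Icc, Nat.add_sub_cancel, Nat.add_sub_add_right,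
    Nat.cast_sub hmn.le, ← sum_Icc_eq_add_sum_Icc f hmn.le] at key
  have hn : (0 : ℝ) < n := by exact_mod_cast m.zero_le.trans_lt hmn
  rw [div_mul_eq_mul_div, le_div_iff₀ (by positivity)]
  calc (∑ j ∈ Icc 1 m, f j) * (∑ j ∈ Icc (m + 1) n, f j) * (c * n)
      = c * ((∑ j ∈ Icc 1 m, f j) * (∑ j ∈ Icc (m + 1) n, f j) * (m + (n - m))) := by ring
    _ ≤ c * (m * (n - m) * c⁻¹ * ∑ j ∈ Icc 1 n, f j) := mul_le_mul_of_nonneg_left key hc.le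
    _ = m * (n - m) * ∑ j ∈ Icc 1 n, f j := by field_simp

theorem sum_Icc_natCast (m : ℕ) : ∑ j ∈ Icc 1 m, (j : ℝ) = m * (m + 1) / 2 := by
  induction m with
  | zero => simp
  | succ k ih =>
    rw [sum_Icc_succ_top (by omega), ih]
    push_cast
    ring

theorem sum_Icc_natCast_sq (m : ℕ) :
    ∑ j ∈ Icc 1 m, (j : ℝ) ^ 2 = m * (m + 1) * (2 * m + 1) / 6 := by
  induction m with
  | zero => simp
  | succ k ih =>
    rw [sum_Icc_succ_top (by omega), ih]
    push_cast
    ring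

theorem sum_Icc_natCast_mul_sub (n : ℕ) :
    ∑ j ∈ Icc 1 (n - 1), (j : ℝ) * (n - j) = n * (n - 1) * (n + 1) / 6 := by
  cases n with
  | zero => simp
  | succ m =>
    have hexpand : ∀ j : ℕ, (j : ℝ) * ((m + 1 : ℕ) - j) = (m + 1 : ℕ) * (j : ℝ) - (j : ℝ) ^ 2 :=
      fun j => by ring
    rw [Nat.add_sub_cancel]
    simp only [hexpand, sum_sub_distrib, ← mul_sum, sum_Icc_natCast, sum_Icc_natCast_sq]
    push_cast
    ring

theorem split_sum_inverse_bound (n : ℕ) (hn : 2 ≤ n) (c : ℝ) (hc : 0 < c)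
    (b : ℕ → ℝ) (hb : ∀ j ∈ Finset.Icc 1 n, c ≤ b j) :
    (∀ j' ∈ Finset.Icc 1 (n - 1),
      (∑ j ∈ Finset.Icc 1 j', (b j)⁻¹) * (∑ j ∈ Finset.Icc (j' + 1) n, (b j)⁻¹) ≤
        ((j' : ℝ) * ((n : ℝ) - (j' : ℝ)) / (c * n)) * ∑ j ∈ Finset.Icc 1 n, (b j)⁻¹) ∧
    (∑ j' ∈ Finset.Icc 1 (n - 1),
        (∑ j ∈ Finset.Icc 1 j', (b j)⁻¹) * (∑ j ∈ Finset.Icc (j' + 1) n, (b j)⁻¹)) ≤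
      (((n : ℝ) - 1) * ((n : ℝ) + 1) / (6 * c)) * ∑ j ∈ Finset.Icc 1 n, (b j)⁻¹ := by
  have hbound : ∀ j' ∈ Icc 1 (n - 1),
      (∑ j ∈ Icc 1 j', (b j)⁻¹) * (∑ j ∈ Icc (j' + 1) n, (b j)⁻¹) ≤
        ((j' : ℝ) * ((n : ℝ) - (j' : ℝ)) / (c * n)) * ∑ j ∈ Icc 1 n, (b j)⁻¹ :=
    fun j' hj' => sum_Icc_mul_sum_Icc_le (by grind) hc
      (fun j hj => inv_nonneg.mpr (hc.le.trans (hb j hj))) fun j hj => inv_anti₀ hc (hb j hj)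
  refine ⟨hbound, ?_⟩
  have hn0 : (n : ℝ) ≠ 0 := Nat.cast_ne_zero.mpr (by omega)
  calc _ ≤ ∑ j' ∈ Icc 1 (n - 1),
        ((j' : ℝ) * ((n : ℝ) - (j' : ℝ)) / (c * n)) * ∑ j ∈ Icc 1 n, (b j)⁻¹ :=
        sum_le_sum hbound
    _ = (n * (n - 1) * (n + 1) / 6) / (c * n) * ∑ j ∈ Icc 1 n, (b j)⁻¹ := by
        rw [← sum_mul, ← sum_div, sum_Icc_natCast_mul_sub]
    _ = _ := by field_simp
end

section
/- Let V : ℝ → ℝ be continuous with c₋r²/2 ≤ V(r) ≤ c₊r²/2 (0 < c₋ ≤ c₊), G(τ) = log ∫_ℝ exp(−V(r) + τr) dr, and π_τ(dr) = exp(−V(r) + τr − G(τ)) dr. Suppose |F(r)| ≤ c|r| for all r. Then for every t with 0 < t < c₋/(2c²), E_{π_τ}[exp(t F²)] ≤ (c₊/(c₋ − 2tc²)) exp((τ²/2)(1/(c₋ − 2tc²) − 1/c₊)). -/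
/-! Since `|F| ≤ c|r|` and `V ≥ c₋r²/2`, the exponent `-V(r) + τr + tF(r)²` is at most
`-(a/2)r² + τr` with `a = c₋ - 2tc² > 0`, so completing the square bounds the unnormalised
moment by `√(2π/a) e^{τ²/(2a)}`. Symmetrically `V ≤ c₊r²/2` gives `e^{G(τ)} ≥ √(2π/c₊) e^{τ²/(2c₊)}`.
The quotient of the two Gaussian integrals is `√(c₊/a) e^{(τ²/2)(1/a - 1/c₊)}`, and `√(c₊/a) ≤ c₊/a`
because `a ≤ c₊`. -/

open MeasureTheory Real

lemma exp_neg_mul_sq_add_mul_eq {a : ℝ} (ha : a ≠ 0) (τ r : ℝ) :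
    exp (-(a / 2) * r ^ 2 + τ * r) = exp (τ ^ 2 / (2 * a)) * exp (-(a / 2) * (r - τ / a) ^ 2) := by
  rw [← exp_add]
  congr 1
  field_simp
  ring

lemma integrable_exp_neg_mul_sq_add_mul {a : ℝ} (ha : 0 < a) (τ : ℝ) :
    Integrable fun r : ℝ => exp (-(a / 2) * r ^ 2 + τ * r) := by
  simp_rw [exp_neg_mul_sq_add_mul_eq ha.ne']
  exact ((integrable_exp_neg_mul_sq (half_pos ha)).comp_sub_right (τ / a)).const_mul _

lemma integral_exp_neg_mul_sq_add_mul {a : ℝ} (ha : 0 < a) (τ : ℝ) :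
    ∫ r : ℝ, exp (-(a / 2) * r ^ 2 + τ * r) = √(2 * π / a) * exp (τ ^ 2 / (2 * a)) := by
  simp_rw [exp_neg_mul_sq_add_mul_eq ha.ne']
  rw [integral_const_mul, integral_sub_right_eq_self (fun r => exp (-(a / 2) * r ^ 2)),
    integral_gaussian, mul_comm, div_div_eq_mul_div, mul_comm π]

lemma integrable_exp_of_le_neg_mul_sq_add_mul {f : ℝ → ℝ} (hf : Measurable f) {a τ : ℝ}
    (ha : 0 < a) (hle : ∀ r, f r ≤ -(a / 2) * r ^ 2 + τ * r) :
    Integrable fun r => exp (f r) :=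
  (integrable_exp_neg_mul_sq_add_mul ha τ).mono' hf.exp.aestronglyMeasurable
    (ae_of_all _ fun r => by rw [norm_of_nonneg (exp_pos _).le]; exact exp_le_exp.mpr (hle r))

lemma integral_exp_le_of_le_neg_mul_sq_add_mul {f : ℝ → ℝ} {a τ : ℝ} (ha : 0 < a)
    (hle : ∀ r, f r ≤ -(a / 2) * r ^ 2 + τ * r) :
    ∫ r, exp (f r) ≤ √(2 * π / a) * exp (τ ^ 2 / (2 * a)) := by
  rw [← integral_exp_neg_mul_sq_add_mul ha τ]
  exact integral_mono_of_nonneg (ae_of_all _ fun r => (exp_pos _).le)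
    (integrable_exp_neg_mul_sq_add_mul ha τ) (ae_of_all _ fun r => exp_le_exp.mpr (hle r))

lemma le_integral_exp_of_neg_mul_sq_add_mul_le {f : ℝ → ℝ} (hf : Integrable fun r => exp (f r))
    {b τ : ℝ} (hb : 0 < b) (hle : ∀ r, -(b / 2) * r ^ 2 + τ * r ≤ f r) :
    √(2 * π / b) * exp (τ ^ 2 / (2 * b)) ≤ ∫ r, exp (f r) := by
  rw [← integral_exp_neg_mul_sq_add_mul hb τ]
  exact integral_mono (integrable_exp_neg_mul_sq_add_mul hb τ) hf fun r => exp_le_exp.mpr (hle r)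

lemma gaussian_integral_le_mul_gaussian_integral {a b : ℝ} (ha : 0 < a) (hab : a ≤ b) (τ : ℝ) :
    √(2 * π / a) * exp (τ ^ 2 / (2 * a)) ≤
      b / a * exp (τ ^ 2 / 2 * (1 / a - 1 / b)) * (√(2 * π / b) * exp (τ ^ 2 / (2 * b))) := by
  have hb : 0 < b := ha.trans_le hab
  have hsqrt : √(2 * π / a) ≤ b / a * √(2 * π / b) :=
    calc √(2 * π / a) = √(b / a) * √(2 * π / b) := by
          rw [← sqrt_mul (div_pos hb ha).le]; congr 1; field_simp
      _ ≤ b / a * √(2 * π / b) := by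
          gcongr; exact sqrt_le_self_iff.mpr (Or.inr ((one_le_div ha).mpr hab))
  have hexp : exp (τ ^ 2 / (2 * a)) = exp (τ ^ 2 / 2 * (1 / a - 1 / b)) * exp (τ ^ 2 / (2 * b)) := by
    rw [← exp_add]; congr 1; field_simp; ring
  rw [hexp]
  calc _ ≤ b / a * √(2 * π / b) * (exp (τ ^ 2 / 2 * (1 / a - 1 / b)) * exp (τ ^ 2 / (2 * b))) := by
        gcongr
    _ = _ := by ring

lemma integral_withDensity_ofReal_exp {X : Type*} [MeasurableSpace X] {μ : Measure X}
    {h : X → ℝ} (hh : Measurable h) (g : X → ℝ) :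
    ∫ x, g x ∂μ.withDensity (fun x => ENNReal.ofReal (exp (h x))) = ∫ x, exp (h x) * g x ∂μ := by
  rw [integral_withDensity_eq_integral_toReal_smul hh.exp.ennreal_ofReal
    (ae_of_all _ fun _ => ENNReal.ofReal_lt_top)]
  simp_rw [ENNReal.toReal_ofReal (exp_pos _).le, smul_eq_mul]

theorem exp_sq_moment_tilted_measure_general (V : ℝ → ℝ) (hV : Continuous V)
    (cm cp : ℝ) (h0 : 0 < cm) (hmp : cm ≤ cp)
    (hVb : ∀ r : ℝ, cm * r ^ 2 / 2 ≤ V r ∧ V r ≤ cp * r ^ 2 / 2)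
    (τ c : ℝ) (F : ℝ → ℝ)
    (hF : ∀ r : ℝ, |F r| ≤ c * |r|) :
    let G : ℝ := Real.log (∫ r : ℝ, Real.exp (-V r + τ * r))
    let pit : Measure ℝ :=
      MeasureTheory.volume.withDensity fun r => ENNReal.ofReal (Real.exp (-V r + τ * r - G))
    ∀ t : ℝ, 0 < t → t < cm / (2 * c ^ 2) →
      ∫ r, Real.exp (t * (F r) ^ 2) ∂pit ≤
        (cp / (cm - 2 * t * c ^ 2)) *
          Real.exp ((τ ^ 2 / 2) * (1 / (cm - 2 * t * c ^ 2) - 1 / cp)) := by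
  intro G pit t ht htc
  set a := cm - 2 * t * c ^ 2
  have ha : 0 < a := by
    rcases eq_or_ne c 0 with rfl | hc
    · simpa [a] using h0
    · have := (lt_div_iff₀ (by positivity)).mp htc
      linarith
  have hcp : 0 < cp := h0.trans_le hmp
  have hVm : Measurable fun r => -V r + τ * r := by fun_prop
  set Z := ∫ r, exp (-V r + τ * r)
  have hZ : √(2 * π / cp) * exp (τ ^ 2 / (2 * cp)) ≤ Z :=
    le_integral_exp_of_neg_mul_sq_add_mul_le
      (integrable_exp_of_le_neg_mul_sq_add_mul hVm h0 (τ := τ) fun r => by linarith [(hVb r).1]) hcp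
      fun r => by linarith [(hVb r).2]
  have hZpos : 0 < Z := lt_of_lt_of_le (by positivity) hZ
  have hmoment : ∫ r, exp (-V r + τ * r + t * F r ^ 2) ≤ √(2 * π / a) * exp (τ ^ 2 / (2 * a)) := by
    refine integral_exp_le_of_le_neg_mul_sq_add_mul ha fun r => ?_
    have hFsq : F r ^ 2 ≤ c ^ 2 * r ^ 2 := by
      rw [← mul_pow]
      exact sq_le_sq.mpr ((hF r).trans (by rw [abs_mul]; gcongr; exact le_abs_self c))
    nlinarith [(hVb r).1]
  calc ∫ r, exp (t * F r ^ 2) ∂pit = (∫ r, exp (-V r + τ * r + t * F r ^ 2)) / Z := by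
        rw [integral_withDensity_ofReal_exp (hVm.sub_const G), div_eq_inv_mul, ← integral_const_mul]
        congr 1 with r
        rw [← exp_add, sub_eq_add_neg, add_right_comm, exp_add _ (-G), exp_neg, exp_log hZpos, mul_comm]
    _ ≤ √(2 * π / a) * exp (τ ^ 2 / (2 * a)) / (√(2 * π / cp) * exp (τ ^ 2 / (2 * cp))) := by
        gcongr
    _ ≤ cp / a * exp (τ ^ 2 / 2 * (1 / a - 1 / cp)) := by
        rw [div_le_iff₀ (by positivity)]
        exact gaussian_integral_le_mul_gaussian_integral ha (by nlinarith) τ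

theorem exp_sq_moment_tilted_measure (V : ℝ → ℝ) (hV : Continuous V)
    (cm cp : ℝ) (h0 : 0 < cm) (hmp : cm ≤ cp)
    (hVb : ∀ r : ℝ, cm * r ^ 2 / 2 ≤ V r ∧ V r ≤ cp * r ^ 2 / 2)
    (τ c : ℝ) (hc : 0 < c) (F : ℝ → ℝ) (hFm : Measurable F)
    (hF : ∀ r : ℝ, |F r| ≤ c * |r|) :
    let G : ℝ := Real.log (∫ r : ℝ, Real.exp (-V r + τ * r))
    let pit : Measure ℝ :=
      MeasureTheory.volume.withDensity fun r => ENNReal.ofReal (Real.exp (-V r + τ * r - G))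
    ∀ t : ℝ, 0 < t → t < cm / (2 * c ^ 2) →
      ∫ r, Real.exp (t * (F r) ^ 2) ∂pit ≤
        (cp / (cm - 2 * t * c ^ 2)) *
          Real.exp ((τ ^ 2 / 2) * (1 / (cm - 2 * t * c ^ 2) - 1 / cp)) :=
  exp_sq_moment_tilted_measure_general V hV cm cp h0 hmp hVb τ c F hF
end
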